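/- arXiv:2310.18036 — 2 statements merged into one kernel-verified Lean document; each statement's English description precedes it below -/
import Mathlib

section
/- If v is a separator node in a 2-cut STT T, then v lies on the path in the underlying tree G between the two vertices of ∂(T_v). -/
open SimpleGraph

variable {V : Type*}

/-- Reachability within a vertex set `S`. -/
def reachIn (G : SimpleGraph V) (S : Set V) : V → V → Prop :=
  Relation.ReflTransGen (fun x y => x ∈ S ∧ y ∈ S ∧ G.Adj x y)

/-- The connected component of `v` inside the vertex set `S`. -/
def compIn (G : SimpleGraph V) (S : Set V) (v : V) : Set V :=
  {u | reachIn G S v u}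

/-- `IsSearchTree G par S r`: the parent map `par` describes a search tree with root `r`
on the part of `G` induced by `S`, built recursively: the root `r` is chosen, and each
connected component of `S \ {r}` carries a search tree whose root is a child of `r`. -/
inductive IsSearchTree (G : SimpleGraph V) (par : V → Option V) : Set V → V → Prop where
  | node (S : Set V) (r : V) (ρ : V → V) (hr : r ∈ S)
      (hρ : ∀ v ∈ S, v ≠ r → par (ρ v) = some r)
      (h : ∀ v ∈ S, v ≠ r → IsSearchTree G par (compIn G (S \ {r}) v) (ρ v)) :
      IsSearchTree G par S r

/-- `isAnc par a v`: `a` is an ancestor of `v` (reflexively). -/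
def isAnc (par : V → Option V) (a v : V) : Prop :=
  Relation.ReflTransGen (fun x y => par x = some y) v a

/-- The subtree rooted at `v`: all descendants of `v` (including `v`). -/
def subtree (par : V → Option V) (v : V) : Set V := {u | isAnc par v u}

/-- The outer boundary `∂(T_v)` of the subtree rooted at `v`. -/
def bdry (G : SimpleGraph V) (par : V → Option V) (v : V) : Set V :=
  {x | x ∉ subtree par v ∧ ∃ u ∈ subtree par v, G.Adj x u}

/-- A search tree is 2-cut if every subtree boundary has size at most 2. -/
def TwoCut (G : SimpleGraph V) (par : V → Option V) : Prop :=
  ∀ v, (bdry G par v).ncard ≤ 2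

open Classical in
/-- The STT rotation of `v` with its parent `p`: `p` becomes a child of `v`, `v` takes the
former parent of `p`, and any child `c` of `v` with `p ∈ ∂(T_c)` is reattached to `p`. -/
noncomputable def rotate (G : SimpleGraph V) (par : V → Option V) (v p : V) :
    V → Option V := fun x =>
  if x = v then par p
  else if x = p then some v
  else if par x = some v ∧ p ∈ bdry G par x then some p
  else par x

/-- A splay step at `x`: a single rotation if `x` has no grandparent; a ZIG-ZAG
(two rotations at `x`) if `x` is a separator; a ZIG-ZIG (rotation at the parent,
then at `x`) otherwise. -/
noncomputable def splayStep (G : SimpleGraph V) (par : V → Option V) (x : V) :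
    V → Option V :=
  match par x with
  | none => par
  | some p =>
    match par p with
    | none => rotate G par x p
    | some g =>
      if (bdry G par x).ncard = 2 then
        rotate G (rotate G par x p) x g
      else
        rotate G (rotate G par p g) x p

/-!
Suppose the separator `v` is not on the tree path `w` from `a` to `b`. Since `T_v` induces a
connected subgraph, `a` and `b` are joined through `T_v`, and by uniqueness of paths in a tree
this route is `w` itself; so the interior of `w` is a path in `T_v \ {v}`. A connected subset of
`T_v \ {v}` lies inside the subtree `T_c` of a single child `c` of `v`, and `v` has a neighbour
in that component. Hence `a`, `b` and `v` all lie in `∂(T_c)`, contradicting the 2-cut property.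
-/

def IsConnectedIn (G : SimpleGraph V) (S : Set V) : Prop :=
  ∀ x ∈ S, ∀ y ∈ S, reachIn G S x y

section ReachIn

variable {G : SimpleGraph V} {S : Set V}

lemma reachIn_symm {x y : V} (h : reachIn G S x y) : reachIn G S y x := by
  induction h with
  | refl => exact .refl
  | tail _ hstep ih => exact .head ⟨hstep.2.1, hstep.1, hstep.2.2.symm⟩ ih

lemma reachIn_of_walk {x y : V} (p : G.Walk x y) (hp : ∀ z ∈ p.support, z ∈ S) :
    reachIn G S x y := by
  induction p with
  | nil => exact .refl
  | cons hadj q ih =>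
    simp only [Walk.support_cons, List.mem_cons, forall_eq_or_imp] at hp
    exact .head ⟨hp.1, hp.2 _ q.start_mem_support, hadj⟩ (ih hp.2)

lemma exists_walk_of_reachIn {x y : V} (hx : x ∈ S) (h : reachIn G S x y) :
    ∃ p : G.Walk x y, ∀ z ∈ p.support, z ∈ S := by
  induction h with
  | refl => exact ⟨.nil, by simpa using hx⟩
  | tail _ hstep ih =>
    obtain ⟨p, hp⟩ := ih
    refine ⟨p.concat hstep.2.2, ?_⟩
    simp only [Walk.support_concat, List.mem_append, List.mem_singleton]
    rintro z (hz | rfl)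
    exacts [hp z hz, hstep.2.1]

lemma exists_isPath_of_reachIn {x y : V} (hx : x ∈ S) (h : reachIn G S x y) :
    ∃ p : G.Walk x y, p.IsPath ∧ ∀ z ∈ p.support, z ∈ S := by
  classical
  obtain ⟨p, hp⟩ := exists_walk_of_reachIn hx h
  exact ⟨p.bypass, p.bypass_isPath, fun z hz => hp z (p.support_bypass_subset_support hz)⟩

lemma SimpleGraph.Connected.isConnectedIn_univ (hG : G.Connected) :
    IsConnectedIn G Set.univ := fun x _ y _ =>
  reachIn_of_walk (hG.preconnected x y).some fun z _ => Set.mem_univ z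

lemma mem_compIn_self (u : V) : u ∈ compIn G S u := .refl

lemma reachIn_compIn {u x y : V} (h : reachIn G S x y) (hx : x ∈ compIn G S u) :
    reachIn G (compIn G S u) x y := by
  induction h using Relation.ReflTransGen.head_induction_on with
  | refl => exact .refl
  | head hstep _ ih =>
    have hnext : _ ∈ compIn G S u := Relation.ReflTransGen.tail hx hstep
    exact .head ⟨hx, hnext, hstep.2.2⟩ (ih hnext)

lemma isConnectedIn_compIn (u : V) : IsConnectedIn G (compIn G S u) := fun _ hx _ hy =>
  reachIn_compIn ((reachIn_symm hx).trans hy) hx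

lemma exists_adj_mem_compIn_of_reachIn {u v : V} (h : reachIn G S u v) (huv : u ≠ v) :
    ∃ x ∈ compIn G (S \ {v}) u, G.Adj v x := by
  induction h using Relation.ReflTransGen.head_induction_on with
  | refl => exact absurd rfl huv
  | @head u u' hstep _ ih =>
    by_cases hu'v : u' = v
    · exact ⟨u, mem_compIn_self u, hu'v ▸ hstep.2.2.symm⟩
    · obtain ⟨x, hx, hvx⟩ := ih hu'v
      exact ⟨x, .head ⟨⟨hstep.1, huv⟩, ⟨hstep.2.1, hu'v⟩, hstep.2.2⟩ hx, hvx⟩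

end ReachIn

lemma SimpleGraph.IsAcyclic.eq_cons_concat {G : SimpleGraph V} (hG : G.IsAcyclic)
    {a b u u' : V} {w : G.Walk a b} (hw : w.IsPath) (hau : G.Adj a u) {P : G.Walk u u'}
    (hP : P.IsPath) (hu'b : G.Adj u' b) (ha : a ∉ P.support) (hb : b ∉ P.support)
    (hab : a ≠ b) : w = .cons hau (P.concat hu'b) := by
  have hW : (Walk.cons hau (P.concat hu'b)).IsPath :=
    (Walk.cons_isPath_iff _ _).2 ⟨hP.concat hb hu'b, by simp [Walk.support_concat, ha, hab]⟩
  exact congrArg Subtype.val ((hG.subsingleton_path a b).elim ⟨w, hw⟩ ⟨_, hW⟩)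

section SearchTree

variable {G : SimpleGraph V} {par : V → Option V} {S : Set V} {r : V}

lemma mem_subtree_self (v : V) : v ∈ subtree par v := .refl

lemma subtree_subset_of_par_eq {c p : V} (hc : par c = some p) :
    subtree par c ⊆ subtree par p := fun _ hx => Relation.ReflTransGen.tail hx hc

lemma acyclic_of_isAnc_root (hroot : par r = none) (h : ∀ x, isAnc par r x) :
    ∀ x, ¬ Relation.TransGen (fun x y => par x = some y) x x := by
  intro x
  induction h x using Relation.ReflTransGen.head_induction_on with
  | refl =>
    intro hc
    obtain ⟨z, hz, -⟩ := Relation.TransGen.head'_iff.mp hc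
    simp [hroot] at hz
  | @head x y hstep _ ih =>
    intro hc
    obtain ⟨z, hz, hzx⟩ := Relation.TransGen.head'_iff.mp hc
    obtain rfl : z = y := Option.some.inj (hz.symm.trans hstep)
    exact ih (Relation.TransGen.tail' hzx hstep)

lemma IsSearchTree.root_mem (hT : IsSearchTree G par S r) : r ∈ S := by
  cases hT with | node _ _ _ hr _ _ => exact hr

lemma IsSearchTree.subset_subtree (hT : IsSearchTree G par S r) : S ⊆ subtree par r := by
  induction hT with
  | node S r ρ _ hρ _ ih =>
    intro u hu
    by_cases hur : u = r
    · exact hur ▸ mem_subtree_self u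
    · exact subtree_subset_of_par_eq (hρ u hu hur) (ih u hu hur (mem_compIn_self u))

lemma IsSearchTree.exists_child (hT : IsSearchTree G par S r) {u : V} (hu : u ∈ S)
    (hur : u ≠ r) : ∃ c, par c = some r ∧ compIn G (S \ {r}) u ⊆ subtree par c := by
  cases hT with
  | node _ _ ρ _ hρ h => exact ⟨ρ u, hρ u hu hur, (h u hu hur).subset_subtree⟩

end SearchTree

section Acyclic

variable {G : SimpleGraph V} {par : V → Option V}
  (hacyc : ∀ x, ¬ Relation.TransGen (fun x y => par x = some y) x x)
include hacyc

lemma notMem_subtree_of_par_eq {c v : V} (hc : par c = some v) : v ∉ subtree par c :=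
  fun h => hacyc v (Relation.TransGen.tail' h hc)

/-- Ancestors of a vertex form a chain, so at most one of them is a child of a given `p`. -/
lemma eq_of_mem_subtree_of_par_eq {c c' p x : V} (hx : x ∈ subtree par c)
    (hx' : x ∈ subtree par c') (hc : par c = some p) (hc' : par c' = some p) : c = c' := by
  have hunique : Relator.RightUnique (fun x y : V => par x = some y) := fun _ _ _ h h' =>
    Option.some.inj (h.symm.trans h')
  suffices ∀ {d d'}, par d = some p → par d' = some p →
      Relation.ReflTransGen (fun x y => par x = some y) d d' → d = d' by
    rcases Relation.ReflTransGen.total_of_right_unique hunique hx hx' with h | h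
    exacts [this hc hc' h, (this hc' hc h).symm]
  intro d d' hd hd' h
  rcases Relation.ReflTransGen.cases_head h with h | ⟨z, hz, hzd'⟩
  · exact h
  · obtain rfl : z = p := Option.some.inj (hz.symm.trans hd)
    exact absurd (Relation.TransGen.tail' hzd' hd') (hacyc z)

/-- With `IsSearchTree.subset_subtree`, the subtree of each child of `r` is exactly the
component of `S \ {r}` it was built on, provided nothing outside `S` hangs below `r`. -/
lemma subtree_child_subset_compIn {S : Set V} {r : V} {ρ : V → V} (hsub : subtree par r ⊆ S)
    (hρ : ∀ v ∈ S, v ≠ r → par (ρ v) = some r)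
    (h : ∀ v ∈ S, v ≠ r → IsSearchTree G par (compIn G (S \ {r}) v) (ρ v))
    {v : V} (hv : v ∈ S) (hvr : v ≠ r) : subtree par (ρ v) ⊆ compIn G (S \ {r}) v := by
  intro x hx
  have hxS : x ∈ S := hsub (subtree_subset_of_par_eq (hρ v hv hvr) hx)
  have hxr : x ≠ r := by
    rintro rfl
    exact notMem_subtree_of_par_eq hacyc (hρ v hv hvr) hx
  have hsame : ρ x = ρ v := eq_of_mem_subtree_of_par_eq hacyc
    ((h x hxS hxr).subset_subtree (mem_compIn_self x)) hx (hρ x hxS hxr) (hρ v hv hvr)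
  exact (h v hv hvr).root_mem.trans (hsame ▸ reachIn_symm (h x hxS hxr).root_mem)

lemma IsSearchTree.isSearchTree_subtree {S : Set V} {r : V} (hT : IsSearchTree G par S r)
    (hsub : subtree par r ⊆ S) (hS : IsConnectedIn G S) :
    ∀ v ∈ S, IsSearchTree G par (subtree par v) v ∧ IsConnectedIn G (subtree par v) := by
  induction hT with
  | node S r ρ hr hρ h ih =>
    intro v hv
    by_cases hvr : v = r
    · subst hvr
      have hT : IsSearchTree G par S v := .node S v ρ hr hρ h
      rw [hsub.antisymm hT.subset_subtree]
      exact ⟨hT, hS⟩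
    · exact ih v hv hvr (subtree_child_subset_compIn hacyc hsub hρ h hv hvr)
        (isConnectedIn_compIn v) v (mem_compIn_self v)

end Acyclic

lemma TwoCut.not_triple_subset_bdry [Finite V] {G : SimpleGraph V} {par : V → Option V}
    (h2 : TwoCut G par) {c x y z : V} (hxy : x ≠ y) (hxz : x ≠ z) (hyz : y ≠ z) :
    ¬ {x, y, z} ⊆ bdry G par c := fun hsub => by
  have hle := Set.ncard_le_ncard hsub (Set.toFinite _)
  rw [Set.ncard_eq_three.2 ⟨x, y, z, hxy, hxz, hyz, rfl⟩] at hle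
  exact absurd (hle.trans (h2 c)) (by norm_num)

/-- A separator node `v` of a 2-cut STT lies on the path in the
underlying tree `G` between the two vertices of `∂(T_v)`. -/
theorem separator_on_path_between_boundary [Fintype V] (G : SimpleGraph V)
    (hG : G.IsTree) (par : V → Option V) (r : V) (hroot : par r = none)
    (hT : IsSearchTree G par Set.univ r) (h2 : TwoCut G par)
    (v a b : V) (hab : a ≠ b) (hb : bdry G par v = {a, b})
    (w : G.Walk a b) (hw : w.IsPath) :
    v ∈ w.support := by
  by_contra hv
  have hacyc := acyclic_of_isAnc_root hroot fun x => hT.subset_subtree (Set.mem_univ x)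
  obtain ⟨hTv, hconn⟩ := hT.isSearchTree_subtree hacyc (Set.subset_univ _)
    hG.connected.isConnectedIn_univ v (Set.mem_univ v)
  obtain ⟨haT, ua, hua, haua⟩ : a ∈ bdry G par v := hb ▸ Set.mem_insert a {b}
  obtain ⟨hbT, ub, hub, hbub⟩ : b ∈ bdry G par v := hb ▸ Set.mem_insert_of_mem a rfl
  obtain ⟨P, hP, hPT⟩ := exists_isPath_of_reachIn hua (hconn ua hua ub hub)
  have hwP : w = .cons haua (P.concat hbub.symm) := hG.isAcyclic.eq_cons_concat hw haua hP
    hbub.symm (fun h => haT (hPT a h)) (fun h => hbT (hPT b h)) hab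
  have hPv : ∀ z ∈ P.support, z ∈ subtree par v \ {v} := fun z hz =>
    ⟨hPT z hz, by rintro rfl; exact hv (by simp [hwP, Walk.support_concat, hz])⟩
  have huav : ua ≠ v := (hPv ua P.start_mem_support).2
  obtain ⟨c, hcv, hcomp⟩ := hTv.exists_child hua huav
  obtain ⟨x, hx, hvx⟩ :=
    exists_adj_mem_compIn_of_reachIn (hconn ua hua v (mem_subtree_self v)) huav
  have hcv_sub := subtree_subset_of_par_eq hcv
  refine h2.not_triple_subset_bdry (c := c) (z := v) hab
    (by rintro rfl; exact haT (mem_subtree_self _))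
    (by rintro rfl; exact hbT (mem_subtree_self _)) ?_
  rintro z (rfl | rfl | rfl)
  · exact ⟨fun h => haT (hcv_sub h), ua, hcomp (mem_compIn_self ua), haua⟩
  · exact ⟨fun h => hbT (hcv_sub h), ub, hcomp (reachIn_of_walk P hPv), hbub⟩
  · exact ⟨notMem_subtree_of_par_eq hacyc hcv, x, hcomp hx, hvx⟩
end

section
/- Let T be a search tree on a tree G, and let u, v be nodes of T with u a strict ancestor of v. Then {u,v} is an edge of G if and only if u ∈ ∂(T_v) and u ∉ ∂(T_c) for every child c of v in T. -/
open SimpleGraph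

variable {V : Type*}

/-!
Two structural facts about a search tree on a connected graph carry the argument. The parent
map has no cycles, since every parent chain ends at the root, which has no parent. Every subtree
`T_v` induces a connected subgraph: `T_v` is exactly the component of the vertex set that the
recursive construction hands to `v`. Hence if `u ~ v` and `u` also had a neighbour `w` in a child
subtree `T_c`, the edge `u w` together with a path from `v` to `w` inside `T_v` would close a
cycle through the edge `u v`. Conversely, a neighbour of `u` in `T_v` other than `v` lies in some
child subtree `T_c`, which would put `u` into `∂(T_c)`.
-/

namespace SimpleGraph.IsAcyclic

theorem eq_of_adj_of_walk_of_notMem_support {G : SimpleGraph V} (hG : G.IsAcyclic) {u v w : V}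
    (hv : G.Adj u v) (hw : G.Adj u w) (p : G.Walk v w) (hu : u ∉ p.support) : v = w := by
  have hbridge : s(u, w) ∈ (Walk.cons hv p).edges :=
    isBridge_iff_forall_walk_mem_edges.mp (isAcyclic_iff_forall_adj_isBridge.mp hG hw) _
  rcases List.mem_cons.mp (Walk.edges_cons hv p ▸ hbridge) with h | h
  · exact (Sym2.congr_right.mp h).symm
  · exact absurd (p.fst_mem_support_of_mem_edges h) hu

end SimpleGraph.IsAcyclic

section ReachIn

variable {G : SimpleGraph V} {S : Set V} {a b : V}

theorem reachIn.symm (h : reachIn G S a b) : reachIn G S b a := by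
  induction h with
  | refl => exact Relation.ReflTransGen.refl
  | tail _ hstep ih => exact ih.head ⟨hstep.2.1, hstep.1, hstep.2.2.symm⟩

theorem reachIn.mono {T : Set V} (hST : S ⊆ T) (h : reachIn G S a b) : reachIn G T a b :=
  Relation.ReflTransGen.mono (fun _ _ hxy => ⟨hST hxy.1, hST hxy.2.1, hxy.2.2⟩) _ _ h

theorem reachIn_univ_of_reachable (h : G.Reachable a b) : reachIn G Set.univ a b :=
  Relation.ReflTransGen.mono (fun _ _ hxy => ⟨trivial, trivial, hxy⟩) _ _
    ((reachable_iff_reflTransGen a b).mp h)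

theorem reachIn.exists_walk (h : reachIn G S a b) (ha : a ∈ S) :
    ∃ p : G.Walk a b, ∀ x ∈ p.support, x ∈ S := by
  induction h with
  | refl => exact ⟨Walk.nil, by simpa using ha⟩
  | tail _ hstep ih =>
    obtain ⟨p, hp⟩ := ih
    refine ⟨p.concat hstep.2.2, fun x hx => ?_⟩
    rcases List.mem_append.mp (Walk.support_concat p hstep.2.2 ▸ hx) with hx | hx
    · exact hp x hx
    · exact List.mem_singleton.mp hx ▸ hstep.2.1

theorem compIn_subset (ha : a ∈ S) : compIn G S a ⊆ S := by
  intro w hw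
  induction hw with
  | refl => exact ha
  | tail _ hstep _ => exact hstep.2.1

theorem reachIn_compIn_s17 (h : b ∈ compIn G S a) : reachIn G (compIn G S a) a b := by
  induction h with
  | refl => exact Relation.ReflTransGen.refl
  | tail hab hstep ih => exact ih.tail ⟨hab, hab.tail hstep, hstep.2.2⟩

end ReachIn

theorem not_transGen_self_of_isAnc {par : V → Option V} {r x : V} (hroot : par r = none)
    (hx : isAnc par r x) : ¬ Relation.TransGen (fun a b => par a = some b) x x := by
  induction hx using Relation.ReflTransGen.head_induction_on with
  | refl =>
    intro hcyc
    obtain ⟨y, hy, -⟩ := Relation.TransGen.head'_iff.mp hcyc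
    simp [hroot] at hy
  | head hxy _ ih =>
    intro hcyc
    obtain ⟨y, hy, hyx⟩ := Relation.TransGen.head'_iff.mp hcyc
    obtain rfl : _ = y := Option.some.inj (hxy.symm.trans hy)
    exact ih (Relation.TransGen.tail' hyx hxy)

def ChildClosed (par : V → Option V) (S : Set V) : Prop :=
  ∀ x y, par x = some y → y ∈ S → x ∈ S

theorem ChildClosed.subtree_subset {par : V → Option V} {S : Set V} {v : V}
    (hS : ChildClosed par S) (hv : v ∈ S) : subtree par v ⊆ S := by
  intro w hw
  induction hw using Relation.ReflTransGen.head_induction_on with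
  | refl => exact hv
  | head hxy _ ih => exact hS _ _ hxy ih

namespace IsSearchTree

variable {G : SimpleGraph V} {par : V → Option V} {S : Set V} {r : V}

theorem root_mem_s17 (hT : IsSearchTree G par S r) : r ∈ S := by
  cases hT with | node _ _ _ hr _ _ => exact hr

theorem isAnc_root (hT : IsSearchTree G par S r) : ∀ x ∈ S, isAnc par r x := by
  induction hT with
  | node S r ρ _ hρ _ ih =>
    intro x hx
    by_cases hxr : x = r
    · exact hxr ▸ Relation.ReflTransGen.refl
    · exact (ih x hx hxr x Relation.ReflTransGen.refl).tail (hρ x hx hxr)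

theorem subtree_root_eq (hT : IsSearchTree G par S r) (hS : ChildClosed par S) :
    subtree par r = S :=
  (hS.subtree_subset hT.root_mem_s17).antisymm hT.isAnc_root

theorem exists_par_eq (hT : IsSearchTree G par S r) :
    ∀ x ∈ S, x ≠ r → ∃ p, par x = some p ∧ (p = r ∨ p ∈ compIn G (S \ {r}) x) := by
  induction hT with
  | node S r ρ _ hρ h ih =>
    intro x hx hxr
    by_cases hxρ : x = ρ x
    · exact ⟨r, hxρ ▸ hρ x hx hxr, Or.inl rfl⟩
    · obtain ⟨p, hp, hcase⟩ := ih x hx hxr x Relation.ReflTransGen.refl hxρ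
      have hC : compIn G (S \ {r}) x ⊆ S \ {r} := compIn_subset (S := S \ {r}) ⟨hx, hxr⟩
      refine ⟨p, hp, Or.inr ?_⟩
      rcases hcase with rfl | hmem
      · exact (h x hx hxr).root_mem_s17
      · exact hmem.mono fun z hz => hC hz.1

theorem childClosed_compIn (hT : IsSearchTree G par S r) (hS : ChildClosed par S)
    (hr : ∀ y ∈ S, par r ≠ some y) {v : V} (hv : v ∈ S) (hvr : v ≠ r) :
    ChildClosed par (compIn G (S \ {r}) v) := by
  intro x y hxy hy
  have hyS : y ∈ S \ {r} := compIn_subset (S := S \ {r}) ⟨hv, hvr⟩ hy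
  have hxS : x ∈ S := hS x y hxy hyS.1
  have hxr : x ≠ r := by
    rintro rfl
    exact hr y hyS.1 hxy
  obtain ⟨p, hp, hcase⟩ := hT.exists_par_eq x hxS hxr
  obtain rfl : y = p := Option.some.inj (hxy.symm.trans hp)
  rcases hcase with rfl | hyx
  · exact absurd rfl hyS.2
  · exact Relation.ReflTransGen.trans (hy : reachIn G (S \ {r}) v y) hyx.symm

theorem reachIn_subtree (hT : IsSearchTree G par S r) (hS : ChildClosed par S)
    (hr : ∀ y ∈ S, par r ≠ some y) (hconn : ∀ w ∈ S, reachIn G S r w) :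
    ∀ v ∈ S, ∀ w ∈ subtree par v, reachIn G (subtree par v) v w := by
  induction hT with
  | node S r ρ hrS hρ h ih =>
    have hT : IsSearchTree G par S r := .node S r ρ hrS hρ h
    intro v hv w hw
    by_cases hvr : v = r
    · subst hvr
      rw [hT.subtree_root_eq hS] at hw ⊢
      exact hconn w hw
    · have hρC : ρ v ∈ compIn G (S \ {r}) v := (h v hv hvr).root_mem_s17
      refine ih v hv hvr (hT.childClosed_compIn hS hr hv hvr) ?_ ?_ v
        Relation.ReflTransGen.refl w hw
      · intro y hy hpar
        obtain rfl : r = y := Option.some.inj ((hρ v hv hvr).symm.trans hpar)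
        exact (compIn_subset (S := S \ {r}) ⟨hv, hvr⟩ hy).2 rfl
      · intro x hx
        exact (reachIn_compIn_s17 hρC).symm.trans (reachIn_compIn_s17 hx)

end IsSearchTree

/-- In a search tree `T` on a tree `G`, if `u` is a strict ancestor of
`v`, then `{u,v} ∈ E(G)` iff `u ∈ ∂(T_v)` and `u ∉ ∂(T_c)` for every child `c` of `v`. -/
theorem adj_iff_bdry_not_child_bdry (G : SimpleGraph V) (hG : G.IsTree)
    (par : V → Option V) (r : V) (hroot : par r = none)
    (hT : IsSearchTree G par Set.univ r)
    (u v : V) (hanc : isAnc par u v) (hne : u ≠ v) :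
    G.Adj u v ↔ (u ∈ bdry G par v ∧ ∀ c, par c = some v → u ∉ bdry G par c) := by
  have hacyc : ∀ x, ¬ Relation.TransGen (fun a b => par a = some b) x x :=
    fun x => not_transGen_self_of_isAnc hroot (hT.isAnc_root x trivial)
  have hconn := hT.reachIn_subtree (fun _ _ _ _ => trivial) (by simp [hroot])
    (fun w _ => reachIn_univ_of_reachable (hG.connected.preconnected r w))
  have huv : u ∉ subtree par v := by
    intro hvu
    rcases Relation.ReflTransGen.cases_head (hvu : isAnc par v u) with rfl | ⟨c, hc, hcv⟩
    · exact hne rfl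
    · exact hacyc u (Relation.TransGen.head' hc (hcv.trans hanc))
  constructor
  · intro hadj
    refine ⟨⟨huv, v, Relation.ReflTransGen.refl, hadj⟩, ?_⟩
    rintro c hc ⟨-, w, hwc, hadjw⟩
    obtain ⟨p, hp⟩ := (hconn v trivial w (hwc.tail hc)).exists_walk Relation.ReflTransGen.refl
    obtain rfl := hG.isAcyclic.eq_of_adj_of_walk_of_notMem_support hadj hadjw p
      fun hu => huv (hp u hu)
    exact hacyc v (Relation.TransGen.tail' hwc hc)
  · rintro ⟨⟨hnotin, w, hw, hadjw⟩, hchild⟩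
    rcases Relation.ReflTransGen.cases_tail (hw : isAnc par v w) with rfl | ⟨c, hwc, hc⟩
    · exact hadjw
    · exact absurd ⟨fun hcu => hnotin (hcu.tail hc), w, hwc, hadjw⟩ (hchild c hc)
end
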